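/- arXiv:2504.21176 — 9 statements merged into one kernel-verified Lean document; each statement's English description precedes it below -/
import Mathlib

section
/- The exponential generating function of the sequence a_n = ∑_{k=1}^{n} (-1)^(k-1) (k-1)! c(n,k) satisfies ∑_{n≥1} a_n x^n / n! = log(1 - log(1-x)) as an identity of formal power series. -/
/-- The number of cycles (orbits, including fixed points) of a permutation. -/
noncomputable def cycleCount {n : ℕ} (σ : Equiv.Perm (Fin n)) : ℕ :=
  Nat.card (Quotient (MulAction.orbitRel (Subgroup.zpowers σ) (Fin n)))

/-- The unsigned Stirling number of the first kind. -/
noncomputable def stirling1 (n k : ℕ) : ℕ :=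
  Nat.card {σ : Equiv.Perm (Fin n) // cycleCount σ = k}

/-- `a n = ∑_{k=1}^n (-1)^(k-1) (k-1)! c(n,k)`. -/
noncomputable def a (n : ℕ) : ℤ :=
  ∑ k ∈ Finset.Icc 1 n, (-1 : ℤ) ^ (k - 1) * (Nat.factorial (k - 1) : ℤ) * (stirling1 n k : ℤ)

/-- The formal power series `-log(1-x) = ∑_{m≥1} x^m/m` over `ℚ`. -/
noncomputable def negLogOneSub : PowerSeries ℚ :=
  PowerSeries.mk fun m => if m = 0 then 0 else 1 / (m : ℚ)

/-- The formal logarithm `log(1+f)` of `1 + f`, for `f` a power series with zero constant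
term: its `n`-th coefficient is `∑_{m=1}^{n} (-1)^(m-1)/m · [x^n] f^m`. -/
noncomputable def logOnePlus (f : PowerSeries ℚ) : PowerSeries ℚ :=
  PowerSeries.mk fun n =>
    ∑ m ∈ Finset.Icc 1 n, (-1 : ℚ) ^ (m - 1) / (m : ℚ) * PowerSeries.coeff n (f ^ m)

/-!
Write `L = -log(1 - x)`. Since `(1 - x) L' = 1`, the series `F = (L^(m+1))'` satisfies
`F = (m + 1) L^m + x F`; comparing coefficients shows that `n! [x^n] L^m / m!` obeys the
recurrence `c(n+1, k+1) = n c(n, k+1) + c(n, k)`, so `[x^n] L^m = m! c(n, m) / n!`, and the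
coefficients of `log(1 + L) = ∑ (-1)^(m-1) L^m / m` are exactly `a_n / n!`.

On the combinatorial side, `decomposeOption` writes a permutation of `Option α` as a point
`p` and a permutation `e` of `α`: for `p = none` the new point is a fixed point added to `e`,
otherwise it is inserted into the cycle of `e` through `p`, which keeps the number of cycles.
-/

namespace Equiv.Perm

variable {α β Q : Type*}

/-- The number of cycles of `σ`, fixed points included (unlike `cycleType`). -/
noncomputable def numCycles (σ : Perm α) : ℕ :=
  Nat.card (Quotient (SameCycle.setoid σ))

theorem orbitRel_zpowers_eq_sameCycle_setoid (σ : Perm α) :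
    MulAction.orbitRel (Subgroup.zpowers σ) α = SameCycle.setoid σ := by
  ext x y
  simp only [MulAction.orbitRel_apply, MulAction.mem_orbit_iff, Subtype.exists,
    Subgroup.mem_zpowers_iff, exists_prop, exists_exists_eq_and, Subgroup.mk_smul, Perm.smul_def]
  exact sameCycle_comm

theorem numCycles_eq_natCard_of_sameCycle_iff {σ : Perm α} {G : α → Q}
    (hG : Function.Surjective G) (h : ∀ x y, σ.SameCycle x y ↔ G x = G y) :
    numCycles σ = Nat.card Q := by
  have hker : SameCycle.setoid σ = Setoid.ker G := Setoid.ext h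
  rw [numCycles, hker, Nat.card_congr (Setoid.quotientKerEquivOfSurjective G hG)]

theorem SameCycle.map_of_forall_sameCycle [Finite α] {σ : Perm α} {τ : Perm β} (f : α → β)
    (hf : ∀ x, τ.SameCycle (f x) (f (σ x))) {x y : α} (h : σ.SameCycle x y) :
    τ.SameCycle (f x) (f y) := by
  obtain ⟨i, rfl⟩ := h.exists_nat_pow_eq
  clear h
  induction i with
  | zero => exact .rfl
  | succ i ih => exact ih.trans (by simpa only [pow_succ', mul_apply] using hf _)

theorem numCycles_permCongr [Finite α] (g : α ≃ β) (e : Perm α) :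
    numCycles (g.permCongr e) = numCycles e := by
  have : Finite β := .of_equiv α g
  refine numCycles_eq_natCard_of_sameCycle_iff (G := fun y ↦ ⟦g.symm y⟧)
    (Quotient.mk_surjective.comp g.symm.surjective) fun x y ↦ ?_
  refine ⟨fun h ↦ Quotient.sound (h.map_of_forall_sameCycle g.symm fun z ↦ ?_), fun h ↦ ?_⟩
  · simpa [permCongr_apply] using sameCycle_apply_right.2 (SameCycle.refl e (g.symm z))
  · simpa using (Quotient.exact h).map_of_forall_sameCycle (τ := g.permCongr e) g fun z ↦ by
      simpa [permCongr_apply] using sameCycle_apply_right.2 (SameCycle.refl (g.permCongr e) (g z))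

theorem numCycles_optionCongr [Finite α] (e : Perm α) :
    numCycles e.optionCongr = numCycles e + 1 := by
  let G : Option α → Option (Quotient (SameCycle.setoid e)) := Option.map (Quotient.mk _)
  refine (numCycles_eq_natCard_of_sameCycle_iff (G := G) ?_
    fun x y ↦ ⟨fun h ↦ ?_, fun h ↦ ?_⟩).trans Finite.card_option
  · rintro (_ | q)
    · exact ⟨none, rfl⟩
    · obtain ⟨a, rfl⟩ := Quotient.mk_surjective q
      exact ⟨some a, rfl⟩
  · refine sameCycle_one.1 (h.map_of_forall_sameCycle G fun z ↦ sameCycle_one.2 ?_)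
    rcases z with _ | z
    · rfl
    · exact congrArg some (Quotient.sound (sameCycle_apply_right.2 .rfl))
  · rcases x with _ | u <;> rcases y with _ | v
    · exact .rfl
    · simp [G] at h
    · simp [G] at h
    · exact (Quotient.exact (Option.some_injective _ h)).map_of_forall_sameCycle some
        fun z ↦ sameCycle_apply_right.2 (SameCycle.refl e.optionCongr (some z))

theorem numCycles_swap_none_mul_optionCongr [Finite α] [DecidableEq α] (e : Perm α) (x : α) :
    numCycles (swap none (some x) * e.optionCongr) = numCycles e := by
  set ρ := swap none (some x) * e.optionCongr
  have hnone : ρ none = some x := by simp [ρ]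
  have hgetD (y : α) : (ρ (some y)).getD x = e y := by
    by_cases hy : e y = x
    · simp [ρ, hy]
    · simp [ρ, swap_apply_of_ne_of_ne, hy]
  have hsome (a : Option α) : ρ.SameCycle a (some (a.getD x)) := by
    rcases a with _ | a
    · exact ⟨1, by simpa using hnone⟩
    · exact .rfl
  have hstep (y : α) : ρ.SameCycle (some y) (some (e y)) :=
    hgetD y ▸ (sameCycle_apply_right.2 .rfl).trans (hsome (ρ (some y)))
  -- the cycle of `ρ` through `none` is the cycle of `e` through `x`, labelled by `x`
  let G (a : Option α) : Quotient (SameCycle.setoid e) := ⟦a.getD x⟧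
  refine numCycles_eq_natCard_of_sameCycle_iff (G := G)
    (Quotient.mk_surjective.comp fun a ↦ ⟨some a, rfl⟩) fun a b ↦ ⟨fun h ↦ ?_, fun h ↦ ?_⟩
  · refine sameCycle_one.1 (h.map_of_forall_sameCycle G fun z ↦ sameCycle_one.2 ?_)
    refine Quotient.sound ?_
    rcases z with _ | y
    · simp [hnone]
    · show e.SameCycle y ((ρ (some y)).getD x)
      rw [hgetD]
      exact sameCycle_apply_right.2 .rfl
  · exact (hsome a).trans (((Quotient.exact h).map_of_forall_sameCycle some hstep).trans
      (hsome b).symm)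

theorem natCard_numCycles_option_succ [Finite α] (k : ℕ) :
    Nat.card {σ : Perm (Option α) // numCycles σ = k + 1} =
      Nat.card {e : Perm α // numCycles e = k} +
        Nat.card α * Nat.card {e : Perm α // numCycles e = k + 1} := by
  classical
  have := Fintype.ofFinite α
  simp only [Nat.card_eq_fintype_card, Fintype.card_subtype, Finset.card_filter]
  rw [← (decomposeOption (α := α)).symm.sum_comp, Fintype.sum_prod_type, Fintype.sum_option]
  simp [decomposeOption_symm_apply, ← one_def, numCycles_optionCongr,
    numCycles_swap_none_mul_optionCongr]

theorem natCard_numCycles_eq_stirlingFirst (α : Type*) [Finite α] (k : ℕ) :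
    Nat.card {σ : Perm α // numCycles σ = k} = Nat.stirlingFirst (Nat.card α) k := by
  have := Fintype.ofFinite α
  refine Fintype.induction_empty_option (P := fun α _ ↦ ∀ k,
    Nat.card {σ : Perm α // numCycles σ = k} = Nat.stirlingFirst (Nat.card α) k) ?_ ?_ ?_ α k
  · intro α β _ g ih k
    have : Finite α := .of_equiv β g.symm
    rw [← Nat.card_congr g, ← ih k]
    exact Nat.card_congr (g.permCongr.subtypeEquiv fun σ ↦ by rw [numCycles_permCongr]).symm
  · rintro (_ | k) <;> simp [numCycles]
  · rintro α _ ih (_ | k)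
    · have (σ : Perm (Option α)) : numCycles σ ≠ 0 :=
        Nat.card_ne_zero.2 ⟨⟨⟦none⟧⟩, inferInstance⟩
      simp [this]
    · rw [natCard_numCycles_option_succ, ih, ih, Finite.card_option, Nat.stirlingFirst_succ_succ]
      ring

end Equiv.Perm

theorem cycleCount_eq_numCycles {n : ℕ} (σ : Equiv.Perm (Fin n)) :
    cycleCount σ = σ.numCycles := by
  rw [cycleCount, Equiv.Perm.orbitRel_zpowers_eq_sameCycle_setoid, Equiv.Perm.numCycles]

theorem stirling1_eq_stirlingFirst (n k : ℕ) : stirling1 n k = Nat.stirlingFirst n k := by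
  simp only [stirling1, cycleCount_eq_numCycles, Equiv.Perm.natCard_numCycles_eq_stirlingFirst,
    Nat.card_fin]

open PowerSeries Nat

theorem PowerSeries.coeff_X_mul_derivative {R : Type*} [CommSemiring R] (f : R⟦X⟧) (n : ℕ) :
    coeff n (X * d⁄dX R f) = n * coeff n f := by
  cases n with
  | zero => simp
  | succ n => rw [coeff_succ_X_mul, coeff_derivative, mul_comm]; push_cast; rfl

theorem derivative_negLogOneSub : d⁄dX ℚ negLogOneSub = mk 1 := by
  ext n
  rw [coeff_derivative, negLogOneSub, coeff_mk, if_neg n.succ_ne_zero, coeff_mk]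
  simp only [Pi.one_apply]
  push_cast
  field_simp

theorem derivative_negLogOneSub_pow_succ (m : ℕ) :
    d⁄dX ℚ (negLogOneSub ^ (m + 1)) =
      (m + 1 : ℚ) • negLogOneSub ^ m + X * d⁄dX ℚ (negLogOneSub ^ (m + 1)) := by
  have hgeom := mk_one_mul_one_sub_eq_one (S := ℚ)
  rw [derivative_pow, derivative_negLogOneSub, Nat.add_sub_cancel, smul_eq_C_mul, map_add,
    map_natCast, map_one]
  push_cast
  linear_combination (↑m + 1) * negLogOneSub ^ m * hgeom

theorem coeff_negLogOneSub_pow_succ_succ (n m : ℕ) :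
    (n + 1) * coeff (n + 1) (negLogOneSub ^ (m + 1)) =
      n * coeff n (negLogOneSub ^ (m + 1)) + (m + 1) * coeff n (negLogOneSub ^ m) := by
  have h := congrArg (coeff n) (derivative_negLogOneSub_pow_succ m)
  rw [coeff_derivative, map_add, coeff_X_mul_derivative, coeff_smul, smul_eq_mul] at h
  linear_combination h

theorem factorial_mul_coeff_negLogOneSub_pow (n m : ℕ) :
    n ! * coeff n (negLogOneSub ^ m) = m ! * Nat.stirlingFirst n m := by
  induction n generalizing m with
  | zero => cases m <;> simp [negLogOneSub]
  | succ n ih =>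
    cases m with
    | zero => simp
    | succ m =>
      have hrec := coeff_negLogOneSub_pow_succ_succ n m
      have ih₀ := ih m
      have ih₁ := ih (m + 1)
      rw [Nat.stirlingFirst_succ_succ, Nat.factorial_succ, Nat.factorial_succ] at *
      push_cast at *
      linear_combination (n ! : ℚ) * hrec + (n : ℚ) * ih₁ + (m + 1 : ℚ) * ih₀

theorem coeff_negLogOneSub_pow (n m : ℕ) :
    coeff n (negLogOneSub ^ m) = m ! * Nat.stirlingFirst n m / n ! := by
  rw [eq_div_iff (by positivity), mul_comm, factorial_mul_coeff_negLogOneSub_pow]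

/-- `∑_{n≥1} a_n x^n/n! = log(1 - log(1-x))` as formal power series over `ℚ`. -/
theorem stmt1 :
    PowerSeries.mk (fun n => if n = 0 then 0 else (a n : ℚ) / (Nat.factorial n : ℚ))
      = logOnePlus negLogOneSub := by
  ext (_ | n)
  · simp [logOnePlus]
  rw [logOnePlus, coeff_mk, coeff_mk, if_neg n.succ_ne_zero, a]
  push_cast
  rw [Finset.sum_div]
  refine Finset.sum_congr rfl fun m hm ↦ ?_
  obtain ⟨j, rfl⟩ := Nat.exists_eq_add_of_le' (Finset.mem_Icc.1 hm).1
  rw [coeff_negLogOneSub_pow, stirling1_eq_stirlingFirst, Nat.factorial_succ j]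
  push_cast
  field_simp
end

section
/- Define a function win on finite rooted trees by: win(T) = true (second player wins) iff for every child subtree T_k of the root, win(T_k) = false. Then φ_T(-1) = 1 if win(T) = true and φ_T(-1) = 0 if win(T) = false. -/
/-- Finite rooted trees: a node together with the list of subtrees at its children. -/
inductive RTree where
  | node : List RTree → RTree

namespace RTree

/-- The polynomial `φ_T(q) = ∏_k (1 + q φ_{T_k}(q))` over the child subtrees. -/
noncomputable def phi : RTree → Polynomial ℤ
  | node ts => (ts.attach.map fun x => 1 + Polynomial.X * phi x.1).prod
decreasing_by simp only [RTree.node.sizeOf_spec]; exact Nat.lt_add_left 1 (List.sizeOf_lt_of_mem x.2)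


/-- `win T = true` iff the second player wins the game on `T`:
every child subtree is a first-player win. -/
def win : RTree → Bool
  | node ts => ts.attach.all fun x => !win x.1
decreasing_by simp only [RTree.node.sizeOf_spec]; exact Nat.lt_add_left 1 (List.sizeOf_lt_of_mem x.2)


/-- Number of edges of a rooted tree. -/
def numEdges : RTree → ℕ
  | node ts => (ts.attach.map fun x => numEdges x.1 + 1).sum
decreasing_by simp only [RTree.node.sizeOf_spec]; exact Nat.lt_add_left 1 (List.sizeOf_lt_of_mem x.2)


/-- The list of all prunings of a rooted tree: for each child, either drop it or keep a
pruning of its subtree.  Each choice is listed once, so multiplicities of equal subtrees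
are accounted for. -/
def prunings : RTree → List RTree
  | node ts =>
      ((ts.attach.map fun x => (none : Option RTree) :: (prunings x.1).map some).sections).map
        fun l => node l.reduceOption
decreasing_by simp only [RTree.node.sizeOf_spec]; exact Nat.lt_add_left 1 (List.sizeOf_lt_of_mem x.2)


end RTree

/-- `φ_T(-1) = 1` if the second player wins the game on `T`, and `φ_T(-1) = 0`
otherwise. -/
theorem stmt7 (T : RTree) :
    Polynomial.eval (-1 : ℤ) (RTree.phi T) = if RTree.win T then 1 else 0 := by
  induction T using RTree.phi.induct with
  | _ ts ih =>
    rw [RTree.phi, RTree.win]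
    rw [← Polynomial.coe_evalRingHom, map_list_prod]
    simp only [List.map_map]
    by_cases h : ∀ x ∈ ts.attach, RTree.win x.1 = false
    · have : ts.attach.all (fun x => !RTree.win x.1) = true := by
        simp [List.all_eq_true]; intro a ha; exact h ⟨a, ha⟩ (List.mem_attach _ _)
      rw [this]
      simp only [if_true]
      apply List.prod_eq_one
      intro a ha
      simp only [List.mem_map] at ha
      obtain ⟨x, hx, rfl⟩ := ha
      simp [ih x, h x hx]
    · push_neg at h
      obtain ⟨x, hx, hw⟩ := h
      have hw' : RTree.win x.1 = true := by simpa using hw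
      have : ts.attach.all (fun x => !RTree.win x.1) = false := by
        simp [List.all_eq_true]; exact ⟨x.1, x.2, by simp [hw']⟩
      rw [this]
      simp only [Bool.false_eq_true, if_false]
      apply List.prod_eq_zero
      refine List.mem_map.2 ⟨x, hx, ?_⟩
      simp [ih x, hw']
end

section
/- For a finite rooted tree T, the number of prunings of T with an even number of edges minus the number of prunings with an odd number of edges is 0 if the first player wins the game on T, and 1 if the second player wins. -/
/-!
Splitting a pruning into the set of kept children and a pruning of each kept child's subtree
shows that `φ_T` is the edge generating function of the prunings of `T`, so the signed count
is `φ_T(-1)`. Then `φ_T(-1) = ∏_k (1 - φ_{T_k}(-1))` is `1` exactly when every `φ_{T_k}(-1)`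
is `0`: by induction it is the indicator of a second-player win.
-/

namespace List

theorem prod_map_sum_sections {α R : Type*} [CommSemiring R] (f : α → R) :
    ∀ L : List (List α),
      (L.map fun l => (l.map f).sum).prod = (L.sections.map fun s => (s.map f).prod).sum
  | [] => by simp
  | l :: L => by
    simp only [sections, map_cons, prod_cons, prod_map_sum_sections f L, flatMap,
      map_flatten, sum_flatten, map_map, Function.comp_def, sum_map_mul_left,
      sum_map_mul_right]

theorem prod_map_ite_zero_one {α M : Type*} [MonoidWithZero M] (p : α → Bool) :
    ∀ l : List α, (l.map fun a => if p a then (0 : M) else 1).prod = if l.all (!p ·) then 1 else 0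
  | [] => by simp
  | a :: l => by
    rw [map_cons, prod_cons, all_cons, prod_map_ite_zero_one p l]
    cases p a <;> simp

theorem countP_mod_two_eq_zero_sub_countP_mod_two_eq_one {α : Type*} (g : α → ℕ)
    (l : List α) :
    (l.countP (fun a => g a % 2 = 0) : ℤ) - l.countP (fun a => g a % 2 = 1)
      = (l.map fun a => (-1 : ℤ) ^ g a).sum := by
  induction l with
  | nil => simp
  | cons a l ih =>
    rw [map_cons, sum_cons, ← ih, countP_cons, countP_cons, neg_one_pow_eq_pow_mod_two]
    rcases Nat.mod_two_eq_zero_or_one (g a) with h | h <;> simp [h] <;> ring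

end List

namespace RTree

open Polynomial

@[elab_as_elim]
theorem induction_mem {motive : RTree → Prop}
    (node : ∀ ts, (∀ t ∈ ts, motive t) → motive (node ts)) : ∀ T, motive T
  | .node ts => node ts fun t _ => induction_mem node t

theorem numEdges_node (ts : List RTree) :
    numEdges (node ts) = (ts.map fun t => numEdges t + 1).sum := by
  rw [numEdges, List.attach_map_val (f := fun t => numEdges t + 1)]

theorem win_node (ts : List RTree) : win (node ts) = ts.all fun t => !win t := by
  rw [win, List.all_subtype (g := fun t => !win t) fun _ _ => rfl, List.unattach_attach]

theorem phi_node (ts : List RTree) : phi (node ts) = (ts.map fun t => 1 + X * phi t).prod := by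
  rw [phi, List.attach_map_val (f := fun t => 1 + X * phi t)]

theorem prunings_node (ts : List RTree) :
    prunings (node ts) =
      ((ts.map fun t => none :: (prunings t).map some).sections).map
        fun l => node l.reduceOption := by
  rw [prunings, List.attach_map_val (f := fun t => none :: (prunings t).map some)]

theorem pow_numEdges_node_reduceOption {M : Type*} [Monoid M] (q : M) :
    ∀ l : List (Option RTree),
      q ^ numEdges (node l.reduceOption)
        = (l.map (Option.elim · 1 fun S => q ^ (numEdges S + 1))).prod
  | [] => by simp [numEdges_node]
  | none :: l => by
    rw [List.reduceOption_cons_of_none, pow_numEdges_node_reduceOption q l]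
    simp
  | some S :: l => by
    rw [List.reduceOption_cons_of_some, List.map_cons, List.prod_cons,
      ← pow_numEdges_node_reduceOption q l, numEdges_node, numEdges_node, List.map_cons,
      List.sum_cons, pow_add]
    rfl

theorem phi_eq_sum_prunings (T : RTree) :
    phi T = ((prunings T).map fun S => X ^ numEdges S).sum := by
  induction T using induction_mem with
  | node ts ih =>
    let w : Option RTree → ℤ[X] := (Option.elim · 1 fun S => X ^ (numEdges S + 1))
    calc phi (node ts)
        = (ts.map fun t => 1 + X * ((prunings t).map fun S => X ^ numEdges S).sum).prod := by
          rw [phi_node, List.map_congr_left fun t ht => by rw [ih t ht]]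
      _ = ((ts.map fun t => none :: (prunings t).map some).map fun c => (c.map w).sum).prod := by
          simp [w, Function.comp_def, pow_succ', List.sum_map_mul_left]
      _ = (((ts.map fun t => none :: (prunings t).map some).sections).map
            fun s => (s.map w).prod).sum := List.prod_map_sum_sections w _
      _ = ((prunings (node ts)).map fun S => X ^ numEdges S).sum := by
          simp [prunings_node, Function.comp_def, pow_numEdges_node_reduceOption, w]

theorem phi_eval_neg_one (T : RTree) : (phi T).eval (-1) = if win T then 1 else 0 := by
  induction T using induction_mem with
  | node ts ih =>
    have factor : ∀ t ∈ ts, (1 + X * phi t).eval (-1) = if win t then 0 else 1 := by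
      intro t ht
      rw [eval_add, eval_mul, eval_one, eval_X, ih t ht]
      cases win t <;> simp
    rw [phi_node, eval_list_prod, List.map_map, Function.comp_def, List.map_congr_left factor,
      List.prod_map_ite_zero_one, win_node]

end RTree

/-- The number of prunings of `T` with an even number of edges minus the number with an
odd number of edges is `1` if the second player wins the game on `T` and `0` if the
first player wins. -/
theorem stmt8 (T : RTree) :
    ((RTree.prunings T).countP (fun S => RTree.numEdges S % 2 = 0) : ℤ)
      - ((RTree.prunings T).countP (fun S => RTree.numEdges S % 2 = 1) : ℤ)
      = if RTree.win T then 1 else 0 := by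
  rw [List.countP_mod_two_eq_zero_sub_countP_mod_two_eq_one, ← RTree.phi_eval_neg_one,
    RTree.phi_eq_sum_prunings, ← Polynomial.coe_evalRingHom, map_list_sum, List.map_map]
  simp [Function.comp_def]
end

section
/- Let T be a rooted tree whose root's children are roots of subtrees T_1,...,T_m, and let T_k' denote the rooted tree consisting of the root of T joined to T_k. Then the pruning lattice of T is isomorphic to the product of the pruning lattices of the T_k', and the pruning lattice of T_k' is isomorphic to the pruning lattice of T_k with a new minimum element adjoined. -/
namespace RTree

/-- Valid positions (vertices) of a rooted tree, encoded as paths of child indices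
from the root. -/
def IsPos : RTree → List ℕ → Prop
  | _, [] => True
  | node ts, i :: l => ∃ h : i < ts.length, IsPos (ts.get ⟨i, h⟩) l
decreasing_by
  all_goals
    simp only [RTree.node.sizeOf_spec]
    first
      | (have := List.sizeOf_lt_of_mem (List.get_mem ts ⟨i, h⟩); omega)
      | (have := List.sizeOf_lt_of_mem (List.getElem_mem (l := ts) h); simp_all; omega)
      | (have := List.sizeOf_lt_of_mem (List.getElem_mem (l := ts) h); simp only [List.get_eq_getElem]; omega)

/-- A pruning of a rooted tree `T`: a set of vertices of `T` containing the root and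
closed under taking ancestors (prefixes).  Prunings are ordered by inclusion, which is
the same as inclusion of their edge sets. -/
structure Pruning (T : RTree) where
  verts : Set (List ℕ)
  root_mem : [] ∈ verts
  valid : ∀ l ∈ verts, IsPos T l
  downClosed : ∀ l₁ l₂ : List ℕ, l₁ <+: l₂ → l₂ ∈ verts → l₁ ∈ verts

instance (T : RTree) : PartialOrder (Pruning T) where
  le a b := a.verts ⊆ b.verts
  le_refl a := subset_rfl
  le_trans a b c hab hbc := Set.Subset.trans hab hbc
  le_antisymm a b hab hba := by
    cases a; cases b; simp only [Pruning.mk.injEq]; exact subset_antisymm hab hba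

/-!
A pruning of `node ts` consists of the root together with, for each child `i`, an
ancestor-closed set of vertices of `ts[i]`. Such a set is either empty or a pruning of
`ts[i]`, so the prunings of `node ts` are ordered like `Π i, WithBot (Pruning ts[i])`.
For `ts = [t]` this is the second isomorphism; substituting it back into each factor gives
the first.
-/

def _root_.OrderIso.piCongrRight {ι : Type*} {α β : ι → Type*} [∀ i, Preorder (α i)]
    [∀ i, Preorder (β i)] (e : ∀ i, α i ≃o β i) : (∀ i, α i) ≃o ∀ i, β i where
  toEquiv := Equiv.piCongrRight fun i => (e i).toEquiv
  map_rel_iff' := by simp [Pi.le_def]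

def _root_.OrderIso.piUnique {ι : Type*} [Unique ι] (α : ι → Type*) [∀ i, Preorder (α i)] :
    (∀ i, α i) ≃o α default where
  toEquiv := Equiv.piUnique α
  map_rel_iff' := by simp [Pi.le_def, Unique.forall_iff]

theorem isPos_nil (T : RTree) : IsPos T [] := by
  cases T; rw [IsPos]; trivial

theorem isPos_cons {ts : List RTree} {i : ℕ} {l : List ℕ} :
    IsPos (node ts) (i :: l) ↔ ∃ h : i < ts.length, IsPos (ts.get ⟨i, h⟩) l := by
  rw [IsPos]

namespace Pruning

variable {T : RTree}

theorem le_iff_forall_cons_mem {P Q : Pruning T} :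
    P ≤ Q ↔ ∀ i l, i :: l ∈ P.verts → i :: l ∈ Q.verts := by
  refine ⟨fun h i l hl => h hl, fun h m hm => ?_⟩
  cases m with
  | nil => exact Q.root_mem
  | cons i l => exact h i l hm

theorem ext_cons {P Q : Pruning T} (h : ∀ i l, i :: l ∈ P.verts ↔ i :: l ∈ Q.verts) :
    P = Q :=
  le_antisymm (le_iff_forall_cons_mem.mpr fun i l => (h i l).mp)
    (le_iff_forall_cons_mem.mpr fun i l => (h i l).mpr)

theorem lt_length_of_cons_mem {ts : List RTree} (P : Pruning (node ts)) {i : ℕ} {l : List ℕ}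
    (h : i :: l ∈ P.verts) : i < ts.length :=
  (isPos_cons.mp (P.valid _ h)).1

end Pruning

section WithBot

variable {t : RTree}

def vertsWithBot : WithBot (Pruning t) → Set (List ℕ)
  | ⊥ => ∅
  | (Q : Pruning t) => Q.verts

theorem vertsWithBot_subset_iff {x y : WithBot (Pruning t)} :
    vertsWithBot x ⊆ vertsWithBot y ↔ x ≤ y := by
  cases x with
  | bot => simp [vertsWithBot]
  | coe P =>
    cases y with
    | bot => exact iff_of_false (fun h => h P.root_mem) (WithBot.not_coe_le_bot P)
    | coe Q => rw [WithBot.coe_le_coe]; rfl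

theorem vertsWithBot_injective : Function.Injective (vertsWithBot (t := t)) := fun _ _ h =>
  le_antisymm (vertsWithBot_subset_iff.mp h.subset) (vertsWithBot_subset_iff.mp h.symm.subset)

theorem isPos_of_mem_vertsWithBot {x : WithBot (Pruning t)} {l : List ℕ}
    (h : l ∈ vertsWithBot x) : IsPos t l := by
  cases x with
  | bot => exact absurd h (Set.notMem_empty l)
  | coe Q => exact Q.valid l h

theorem mem_vertsWithBot_of_prefix {x : WithBot (Pruning t)} {l₁ l₂ : List ℕ}
    (hpre : l₁ <+: l₂) (h : l₂ ∈ vertsWithBot x) : l₁ ∈ vertsWithBot x := by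
  cases x with
  | bot => exact absurd h (Set.notMem_empty l₂)
  | coe Q => exact Q.downClosed l₁ l₂ hpre h

open Classical in
noncomputable def ofVertsWithBot (S : Set (List ℕ)) (valid : ∀ l ∈ S, IsPos t l)
    (downClosed : ∀ l₁ l₂ : List ℕ, l₁ <+: l₂ → l₂ ∈ S → l₁ ∈ S) :
    WithBot (Pruning t) :=
  if h : [] ∈ S then ↑(⟨S, h, valid, downClosed⟩ : Pruning t) else ⊥

theorem vertsWithBot_ofVertsWithBot (S : Set (List ℕ)) (valid : ∀ l ∈ S, IsPos t l)
    (downClosed : ∀ l₁ l₂ : List ℕ, l₁ <+: l₂ → l₂ ∈ S → l₁ ∈ S) :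
    vertsWithBot (ofVertsWithBot S valid downClosed) = S := by
  unfold ofVertsWithBot
  split_ifs with h
  · rfl
  · exact (Set.eq_empty_of_forall_notMem fun l hl => h (downClosed _ l l.nil_prefix hl)).symm

end WithBot

namespace Pruning

variable {ts : List RTree}

noncomputable def branch (P : Pruning (node ts)) (i : Fin ts.length) :
    WithBot (Pruning (ts.get i)) :=
  ofVertsWithBot {l | (i : ℕ) :: l ∈ P.verts}
    (fun l hl => by simpa using (isPos_cons.mp (P.valid _ hl)).2)
    (fun l₁ l₂ hpre h => P.downClosed _ _ (List.cons_prefix_cons.mpr ⟨rfl, hpre⟩) h)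

theorem vertsWithBot_branch (P : Pruning (node ts)) (i : Fin ts.length) :
    vertsWithBot (P.branch i) = {l | (i : ℕ) :: l ∈ P.verts} :=
  vertsWithBot_ofVertsWithBot ..

def graft (f : ∀ i : Fin ts.length, WithBot (Pruning (ts.get i))) : Pruning (node ts) where
  verts := {m | match m with
    | [] => True
    | i :: l => ∃ h : i < ts.length, l ∈ vertsWithBot (f ⟨i, h⟩)}
  root_mem := trivial
  valid := by
    rintro (_ | ⟨i, l⟩) hm
    · exact isPos_nil _
    · obtain ⟨h, hl⟩ := hm
      exact isPos_cons.mpr ⟨h, isPos_of_mem_vertsWithBot hl⟩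
  downClosed := by
    rintro (_ | ⟨i, l₁⟩) (_ | ⟨j, l₂⟩) hpre hm
    · trivial
    · trivial
    · exact absurd (List.prefix_nil.mp hpre) (List.cons_ne_nil _ _)
    · obtain ⟨rfl, htail⟩ := List.cons_prefix_cons.mp hpre
      obtain ⟨h, hl⟩ := hm
      exact ⟨h, mem_vertsWithBot_of_prefix htail hl⟩

theorem cons_mem_graft {f : ∀ i : Fin ts.length, WithBot (Pruning (ts.get i))} {i : ℕ}
    {l : List ℕ} :
    i :: l ∈ (graft f).verts ↔ ∃ h : i < ts.length, l ∈ vertsWithBot (f ⟨i, h⟩) :=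
  Iff.rfl

end Pruning

open Pruning

noncomputable def pruningNodeEquiv (ts : List RTree) :
    Pruning (node ts) ≃o ∀ i : Fin ts.length, WithBot (Pruning (ts.get i)) where
  toFun := branch
  invFun := graft
  left_inv P := ext_cons fun i l => by
    rw [cons_mem_graft]
    simp only [vertsWithBot_branch, Set.mem_ofPred_eq]
    exact ⟨fun ⟨_, h⟩ => h, fun h => ⟨P.lt_length_of_cons_mem h, h⟩⟩
  right_inv f := funext fun i => vertsWithBot_injective <| by
    rw [vertsWithBot_branch]
    ext l
    exact ⟨fun ⟨_, h⟩ => h, fun h => ⟨i.isLt, h⟩⟩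
  map_rel_iff' {P Q} := by
    simp only [Equiv.coe_fn_mk, Pi.le_def, ← vertsWithBot_subset_iff, vertsWithBot_branch,
      le_iff_forall_cons_mem, Set.ofPred_subset_ofPred]
    exact ⟨fun h i l hl => h ⟨i, P.lt_length_of_cons_mem hl⟩ l hl, fun h i l => h i l⟩

noncomputable def pruningNodeSingletonEquiv (t : RTree) :
    Pruning (node [t]) ≃o WithBot (Pruning t) :=
  letI : Unique (Fin [t].length) := Fin.instUnique
  (pruningNodeEquiv [t]).trans (OrderIso.piUnique _)

/-- For `T` a rooted tree whose root's children are the roots of subtrees `ts = [T_1,…,T_m]`,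
and `T_k' = node [T_k]` the tree consisting of the root of `T` joined to `T_k`:
the pruning lattice of `T` is isomorphic to the product of the pruning lattices of the
`T_k'`, and the pruning lattice of each `node [t]` is isomorphic to the pruning lattice of
`t` with a new minimum element adjoined. -/
theorem stmt9 (ts : List RTree) :
    Nonempty (RTree.Pruning (RTree.node ts)
        ≃o ∀ i : Fin ts.length, RTree.Pruning (RTree.node [ts.get i]))
    ∧ ∀ t : RTree, Nonempty (RTree.Pruning (RTree.node [t]) ≃o WithBot (RTree.Pruning t)) :=
  ⟨⟨(pruningNodeEquiv ts).trans
      (OrderIso.piCongrRight fun i => (pruningNodeSingletonEquiv (ts.get i)).symm)⟩,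
    fun t => ⟨pruningNodeSingletonEquiv t⟩⟩
end RTree
end

section
/- Let α be a 213-avoiding permutation of {1,...,n} with α(1) = 1. Then the inversion set of α is exactly {(i,j) : t_α(i) ≤ j ≤ n}, where t_α(i) is the position of the first inversion from i (the least j > i with α(j) < α(i)), with t_α(i) = n+1 if no such j exists. -/
/-- The first inversion function of a permutation `α` of `{0,…,n-1}` (0-indexed): it sends
position `i` to the least position `j > i` with `α j < α i`, and to the sentinel `n` if no
such position exists. -/
noncomputable def firstInv {n : ℕ} (α : Equiv.Perm (Fin n)) (i : Fin n) : ℕ :=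
  sInf ({j : ℕ | ∃ hj : j < n, (i : ℕ) < j ∧ α ⟨j, hj⟩ < α i} ∪ {n})

/-- For a `213`-avoiding permutation `α` fixing the first element, the inversions of `α`
are exactly the pairs `(i,j)` with `firstInv α i ≤ j`. -/
theorem stmt13 (n : ℕ) (hn : 0 < n) (α : Equiv.Perm (Fin n))
    (hfix : α ⟨0, hn⟩ = ⟨0, hn⟩)
    (havoid : ¬ ∃ i j k : Fin n, i < j ∧ j < k ∧ α j < α i ∧ α i < α k) :
    ∀ i j : Fin n, (i < j ∧ α j < α i) ↔ firstInv α i ≤ (j : ℕ) := by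
  intro i j
  constructor
  · rintro ⟨hij, hji⟩
    apply Nat.sInf_le
    left
    exact ⟨j.isLt, hij, by simpa using hji⟩
  · intro h
    have hne : ({j : ℕ | ∃ hj : j < n, (i : ℕ) < j ∧ α ⟨j, hj⟩ < α i} ∪ {n}).Nonempty :=
      ⟨n, Or.inr rfl⟩
    have hmem := Nat.sInf_mem hne
    rw [firstInv] at h
    set m := sInf ({j : ℕ | ∃ hj : j < n, (i : ℕ) < j ∧ α ⟨j, hj⟩ < α i} ∪ {n}) with hm
    rcases hmem with hm1 | hm1
    · obtain ⟨hmn, him, hαm⟩ := hm1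
      have hij : i < j := Fin.lt_def.mpr (lt_of_lt_of_le him h)
      refine ⟨hij, ?_⟩
      by_contra hnot
      push_neg at hnot
      rcases lt_or_eq_of_le hnot with hlt | heq
      · -- α i < α j
        rcases lt_or_eq_of_le h with hmj | hmj
        · exact havoid ⟨i, ⟨m, hmn⟩, j, him, hmj, hαm, hlt⟩
        · have : (⟨m, hmn⟩ : Fin n) = j := Fin.ext hmj
          rw [this] at hαm
          exact absurd hlt (not_lt.mpr hαm.le)
      · have : i = j := α.injective heq
        exact absurd hij (by simp [this])
    · simp only [Set.mem_singleton_iff] at hm1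
      rw [hm1] at h
      exact absurd h (not_le.mpr j.isLt)
end

section
/- Let α be a 312-avoiding permutation of {1,...,n} with α(1) = 1, and let t_α be its first inversion function. Then the inversion set of α is exactly {(i,j) : j ≤ n and j ∈ {t_α^k(i) : k ≥ 1}}, i.e., (i,j) is an inversion iff j is reachable from i by iterating t_α. -/
/-- The first inversion function extended to `{0,…,n}`, fixing the sentinel `n`. -/
noncomputable def firstInvFun {n : ℕ} (α : Equiv.Perm (Fin n)) : ℕ → ℕ := fun m =>
  if h : m < n then firstInv α ⟨m, h⟩ else n

lemma firstInv_mem {n : ℕ} (α : Equiv.Perm (Fin n)) (i : Fin n) :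
    firstInv α i ∈ ({j : ℕ | ∃ hj : j < n, (i : ℕ) < j ∧ α ⟨j, hj⟩ < α i} ∪ {n}) :=
  Nat.sInf_mem ⟨n, Or.inr rfl⟩

lemma firstInvFun_apply {n : ℕ} (α : Equiv.Perm (Fin n)) (i : Fin n) :
    firstInvFun α (i : ℕ) = firstInv α i := by
  simp [firstInvFun, i.isLt]

lemma firstInvFun_fix {n : ℕ} (α : Equiv.Perm (Fin n)) : firstInvFun α n = n := by
  simp [firstInvFun]

lemma firstInvFun_iterate_fix {n : ℕ} (α : Equiv.Perm (Fin n)) (k : ℕ) :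
    (firstInvFun α)^[k] n = n :=
  Function.iterate_fixed (firstInvFun_fix α) k

/-- forward direction -/
lemma fwd {n : ℕ} (α : Equiv.Perm (Fin n)) :
    ∀ k : ℕ, ∀ i j : Fin n, (firstInvFun α)^[k+1] (i : ℕ) = (j : ℕ) →
      i < j ∧ α j < α i := by
  intro k
  induction k with
  | zero =>
    intro i j h
    simp only [zero_add, Function.iterate_one, firstInvFun_apply] at h
    rcases firstInv_mem α i with ⟨hj, h1, h2⟩ | hmem
    · have hje : (⟨firstInv α i, hj⟩ : Fin n) = j := Fin.ext h
      rw [hje] at h2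
      exact ⟨Fin.lt_def.mpr (h ▸ h1), h2⟩
    · simp only [Set.mem_singleton_iff] at hmem
      rw [h] at hmem
      exact absurd hmem (Nat.ne_of_lt j.isLt)
  | succ k ih =>
    intro i j h
    rw [Function.iterate_succ_apply, firstInvFun_apply] at h
    rcases firstInv_mem α i with ⟨hm, h1, h2⟩ | hmem
    · set m : Fin n := ⟨firstInv α i, hm⟩ with hmdef
      have h' : (firstInvFun α)^[k+1] (m : ℕ) = (j : ℕ) := h
      obtain ⟨hlt, hα⟩ := ih m j h'
      exact ⟨lt_trans (Fin.lt_def.mpr h1) hlt, lt_trans hα h2⟩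
    · simp only [Set.mem_singleton_iff] at hmem
      rw [hmem, firstInvFun_iterate_fix] at h
      exact absurd h (Nat.ne_of_gt j.isLt)

/-- backward direction -/
lemma bwd {n : ℕ} (α : Equiv.Perm (Fin n))
    (havoid : ¬ ∃ i j k : Fin n, i < j ∧ j < k ∧ α j < α k ∧ α k < α i) :
    ∀ d : ℕ, ∀ i j : Fin n, (j : ℕ) - (i : ℕ) ≤ d → i < j → α j < α i →
      ∃ k : ℕ, 1 ≤ k ∧ (firstInvFun α)^[k] (i : ℕ) = (j : ℕ) := by
  intro d
  induction d with
  | zero =>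
    intro i j hd hij _
    have : (i : ℕ) < j := hij
    omega
  | succ d ih =>
    intro i j hd hij hα
    have hjset : (j : ℕ) ∈ ({j' : ℕ | ∃ hj : j' < n, (i : ℕ) < j' ∧ α ⟨j', hj⟩ < α i} ∪ {n}) :=
      Or.inl ⟨j.isLt, hij, by rw [Fin.eta]; exact hα⟩
    have hle : firstInv α i ≤ (j : ℕ) := Nat.sInf_le hjset
    rcases eq_or_lt_of_le hle with heq | hlt
    · exact ⟨1, le_refl 1, by rw [Function.iterate_one, firstInvFun_apply, heq]⟩
    · -- m := firstInv α i < j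
      rcases firstInv_mem α i with ⟨hm, h1, h2⟩ | hmem
      · set m : Fin n := ⟨firstInv α i, hm⟩ with hmdef
        have himlt : i < m := Fin.lt_def.mpr h1
        have hmj : m < j := Fin.lt_def.mpr hlt
        -- α j < α m by 312-avoidance
        have hαmj : α j < α m := by
          rcases lt_trichotomy (α j) (α m) with h' | h' | h'
          · exact h'
          · exact absurd (α.injective h'.symm) (Fin.ne_of_lt hmj)
          · exact absurd ⟨i, m, j, himlt, hmj, h', hα⟩ havoid
        obtain ⟨k, hk1, hk2⟩ := ih m j (by
          have : (i : ℕ) < (m : ℕ) := h1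
          have : (m : ℕ) < (j : ℕ) := hlt
          omega) hmj hαmj
        refine ⟨k + 1, by omega, ?_⟩
        rw [Function.iterate_succ_apply, firstInvFun_apply]
        exact hk2
      · simp only [Set.mem_singleton_iff] at hmem
        have := j.isLt
        omega

/-- For a `312`-avoiding permutation `α` fixing the first element, the inversions of `α`
are exactly the pairs `(i,j)` such that `j` is reachable from `i` by iterating the first
inversion function. -/
theorem stmt14 (n : ℕ) (hn : 0 < n) (α : Equiv.Perm (Fin n))
    (hfix : α ⟨0, hn⟩ = ⟨0, hn⟩)
    (havoid : ¬ ∃ i j k : Fin n, i < j ∧ j < k ∧ α j < α k ∧ α k < α i) :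
    ∀ i j : Fin n, (i < j ∧ α j < α i)
      ↔ ∃ k : ℕ, 1 ≤ k ∧ (firstInvFun α)^[k] (i : ℕ) = (j : ℕ) := by
  intro i j
  constructor
  · rintro ⟨hij, hα⟩
    exact bwd α havoid ((j : ℕ) - i) i j le_rfl hij hα
  · rintro ⟨k, hk1, hk2⟩
    obtain ⟨k', rfl⟩ := Nat.exists_eq_add_of_le hk1
    rw [Nat.add_comm] at hk2
    exact fwd α k' i j hk2
end

section
/- The number of 213-avoiding permutations of {1,...,n} fixing 1 equals the number of 312-avoiding permutations of {1,...,n} fixing 1, and both equal the Catalan number C_{n-1}. -/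
/-!
Reading a permutation as the list of its values, a fixed point in first position can take part
in neither a `213` nor a `312` pattern, so both counts are numbers of pattern-avoiding
arrangements of `{1, …, n - 1}`, and reversal exchanges the two patterns. A `213`-avoiding
arrangement of an interval splits at its minimum `m` as `A ++ m :: B` with every entry of `B`
below every entry of `A`; hence `B` and `A` are `213`-avoiding arrangements of an initial and a
final subinterval, which is exactly the Catalan recurrence.
-/

open List Finset

namespace PermPattern

variable {α : Type*}

def Avoids (p : α → α → α → Prop) (l : List α) : Prop :=
  ∀ ⦃x y z⦄, [x, y, z] <+ l → ¬ p x y z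

def Pattern213 [LT α] (x y z : α) : Prop := y < x ∧ x < z

def Pattern312 [LT α] (x y z : α) : Prop := y < z ∧ z < x

section Avoids

variable {p : α → α → α → Prop} {l l' : List α}

theorem Avoids.sublist (h : Avoids p l) (hs : l' <+ l) : Avoids p l' :=
  fun _ _ _ hxyz => h (hxyz.trans hs)

theorem avoids_nil : Avoids p [] := by
  simp [Avoids]

theorem avoids_reverse_iff : Avoids p l.reverse ↔ Avoids (fun x y z => p z y x) l := by
  simp only [Avoids, sublist_reverse_iff, reverse_cons, reverse_nil, nil_append, cons_append]
  exact ⟨fun h x y z hs => h hs, fun h x y z hs => h hs⟩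

theorem avoids_cons_iff {a : α} (ha : ∀ y z, ¬ p a y z) : Avoids p (a :: l) ↔ Avoids p l := by
  refine ⟨fun h => h.sublist (sublist_cons_self a l), fun h x y z hs => ?_⟩
  rcases sublist_cons_iff.1 hs with hs | ⟨r, hr, -⟩
  · exact h hs
  · obtain ⟨rfl, -⟩ := cons_eq_cons.1 hr
    exact ha y z

theorem triple_sublist_append_iff {x y z : α} {A B : List α} :
    [x, y, z] <+ A ++ B ↔ [x, y, z] <+ A ∨ ([x, y] <+ A ∧ z ∈ B) ∨ (x ∈ A ∧ [y, z] <+ B) ∨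
      [x, y, z] <+ B := by
  rw [sublist_append_iff]
  constructor
  · rintro ⟨l₁, l₂, h, h₁, h₂⟩
    rcases l₁ with _ | ⟨a, _ | ⟨b, _ | ⟨c, _ | ⟨d, l₁⟩⟩⟩⟩ <;> simp at h <;> grind
  · rintro (h | ⟨h, hz⟩ | ⟨hx, h⟩ | h)
    · exact ⟨_, [], by simp, h, nil_sublist _⟩
    · exact ⟨_, [z], rfl, h, singleton_sublist.2 hz⟩
    · exact ⟨[x], _, rfl, singleton_sublist.2 hx, h⟩
    · exact ⟨[], _, rfl, nil_sublist _, h⟩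

theorem avoids213_append_cons_iff [LinearOrder α] {A B : List α} {m : α}
    (hA : ∀ a ∈ A, m < a) (hB : ∀ b ∈ B, m < b) :
    Avoids Pattern213 (A ++ m :: B) ↔
      Avoids Pattern213 A ∧ Avoids Pattern213 B ∧ ∀ a ∈ A, ∀ b ∈ B, b ≤ a := by
  constructor
  · intro h
    refine ⟨h.sublist (sublist_append_left _ _),
      h.sublist ((sublist_cons_self _ _).trans (sublist_append_right _ _)), fun a ha b hb => ?_⟩
    by_contra! hab
    exact h ((singleton_sublist.2 ha).append ((singleton_sublist.2 hb).cons_cons m)) ⟨hA a ha, hab⟩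
  · rintro ⟨hA', hB', hAB⟩ x y z hs ⟨hyx, hxz⟩
    have tail_mem {u v : α} (h : [u, v] <+ m :: B) : v ∈ B := by
      rcases sublist_cons_iff.1 h with h | ⟨r, hr, h⟩
      · exact h.subset (by simp)
      · obtain ⟨-, rfl⟩ := cons_eq_cons.1 hr
        exact h.subset (by simp)
    rcases triple_sublist_append_iff.1 hs with h | ⟨h, hz⟩ | ⟨hx, h⟩ | h
    · exact hA' h ⟨hyx, hxz⟩
    · have hx := hA x (h.subset (by simp))
      rcases mem_cons.1 hz with rfl | hz
      · exact hx.not_gt hxz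
      · exact (hAB x (h.subset (by simp)) z hz).not_gt hxz
    · exact (hAB x hx z (tail_mem h)).not_gt hxz
    · rcases sublist_cons_iff.1 h with h | ⟨r, hr, h⟩
      · exact hB' h ⟨hyx, hxz⟩
      · obtain ⟨rfl, rfl⟩ := cons_eq_cons.1 hr
        exact (hB y (h.subset (by simp))).not_gt hyx

theorem avoids_ofFn_iff {n : ℕ} (f : Fin n → α) :
    Avoids p (ofFn f) ↔ ¬ ∃ i j k : Fin n, i < j ∧ j < k ∧ p (f i) (f j) (f k) := by
  simp only [Avoids, not_exists, not_and]
  constructor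
  · intro h i j k hij hjk
    have hs := map_getElem_sublist (l := ofFn f)
      (is := [i.cast length_ofFn.symm, j.cast length_ofFn.symm, k.cast length_ofFn.symm])
      (by simpa using ⟨⟨hij, hij.trans hjk⟩, hjk⟩)
    simpa using @h _ _ _ hs
  · intro h x y z hs
    obtain ⟨is, his, hlt⟩ := sublist_eq_map_getElem hs
    rcases is with _ | ⟨i, _ | ⟨j, _ | ⟨k, _ | ⟨_, _⟩⟩⟩⟩ <;> simp at his
    obtain ⟨rfl, rfl, rfl⟩ := his
    simp at hlt
    exact h (i.cast length_ofFn) (j.cast length_ofFn) (k.cast length_ofFn) hlt.1.1 hlt.2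

end Avoids

theorem perm_range'_of_append_perm_range' {A B : List ℕ} {s n : ℕ} (h : B ++ A ~ range' s n)
    (hBA : ∀ b ∈ B, ∀ a ∈ A, b ≤ a) :
    B ~ range' s B.length ∧ A ~ range' (s + B.length) A.length := by
  -- sorting both parts yields a sorted permutation of the interval, i.e. the interval itself
  have hB := mergeSort_perm B (· ≤ ·)
  have hA := mergeSort_perm A (· ≤ ·)
  have hsorted : B.mergeSort (· ≤ ·) ++ A.mergeSort (· ≤ ·) =
      range' s B.length ++ range' (s + B.length) A.length := by
    rw [range'_append_1, ← length_append, h.length_eq, length_range']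
    refine Perm.eq_of_pairwise (le := (· ≤ ·)) (fun _ _ _ _ => Nat.le_antisymm) ?_
      (pairwise_le_range' 1) ((hB.append hA).trans h)
    exact pairwise_append.2 ⟨pairwise_mergeSort' _ B, pairwise_mergeSort' _ A,
      fun b hb a ha => hBA b (hB.subset hb) a (hA.subset ha)⟩
  obtain ⟨hB', hA'⟩ := append_inj hsorted (by simp)
  exact ⟨(hB' ▸ hB).symm, (hA' ▸ hA).symm⟩

open scoped Classical in
noncomputable def avoiders (p : ℕ → ℕ → ℕ → Prop) (a k : ℕ) : Finset (List ℕ) :=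
  (range' a k).permutations.toFinset.filter (Avoids p)

section Avoiders

variable {p : ℕ → ℕ → ℕ → Prop} {a k : ℕ} {l : List ℕ}

theorem mem_avoiders : l ∈ avoiders p a k ↔ l ~ range' a k ∧ Avoids p l := by
  simp [avoiders, mem_permutations]

theorem avoiders_zero : avoiders p a 0 = {[]} := by
  ext l
  rw [mem_avoiders, Finset.mem_singleton, range'_zero, perm_nil]
  exact ⟨And.left, fun h => ⟨h, h ▸ avoids_nil⟩⟩

theorem length_of_mem_avoiders (h : l ∈ avoiders p a k) : l.length = k := by
  simpa using (mem_avoiders.1 h).1.length_eq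

theorem le_of_mem_avoiders {x : ℕ} (h : l ∈ avoiders p a k) (hx : x ∈ l) : a ≤ x :=
  (mem_range'_1.1 ((mem_avoiders.1 h).1.subset hx)).1

theorem lt_of_mem_avoiders {x : ℕ} (h : l ∈ avoiders p a k) (hx : x ∈ l) : x < a + k :=
  (mem_range'_1.1 ((mem_avoiders.1 h).1.subset hx)).2

theorem append_cons_mem_avoiders213 {A B : List ℕ} {i j : ℕ}
    (hA : A ∈ avoiders Pattern213 (a + 1 + j) i) (hB : B ∈ avoiders Pattern213 (a + 1) j) :
    A ++ a :: B ∈ avoiders Pattern213 a (i + j + 1) := by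
  have hA' := mem_avoiders.1 hA
  have hB' := mem_avoiders.1 hB
  refine mem_avoiders.2 ⟨?_, (avoids213_append_cons_iff (fun x hx => ?_) (fun x hx => ?_)).2
    ⟨hA'.2, hB'.2, fun x hx y hy => ?_⟩⟩
  · calc A ++ a :: B ~ a :: (B ++ A) := perm_middle.trans (perm_append_comm.cons a)
      _ ~ a :: (range' (a + 1) j ++ range' (a + 1 + j) i) := (hB'.1.append hA'.1).cons a
      _ = range' a (i + j + 1) := by rw [range'_append_1, range'_succ, Nat.add_comm j]
  · have := le_of_mem_avoiders hA hx
    omega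
  · have := le_of_mem_avoiders hB hx
    omega
  · have := le_of_mem_avoiders hA hx
    have := lt_of_mem_avoiders hB hy
    omega

theorem exists_append_cons_of_mem_avoiders213 (hl : l ∈ avoiders Pattern213 a (k + 1)) :
    ∃ A B : List ℕ, l = A ++ a :: B ∧ A ∈ avoiders Pattern213 (a + 1 + B.length) A.length ∧
      B ∈ avoiders Pattern213 (a + 1) B.length ∧ A.length + B.length = k := by
  obtain ⟨hperm, havoid⟩ := mem_avoiders.1 hl
  obtain ⟨A, B, rfl⟩ := append_of_mem (a := a) (hperm.mem_iff.2 (by simp))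
  have hBA : B ++ A ~ range' (a + 1) k := by
    rw [range'_succ] at hperm
    exact perm_append_comm.trans ((perm_middle.symm.trans hperm).cons_inv)
  have hgt : ∀ x ∈ A ++ B, a < x := fun x hx =>
    (mem_range'_1.1 (hBA.subset (perm_append_comm.subset hx))).1
  obtain ⟨hA, hB, hdom⟩ := (avoids213_append_cons_iff (fun x hx => hgt x (by simp [hx]))
    (fun x hx => hgt x (by simp [hx]))).1 havoid
  obtain ⟨hBr, hAr⟩ := perm_range'_of_append_perm_range' hBA (fun b hb a ha => hdom a ha b hb)
  exact ⟨A, B, rfl, mem_avoiders.2 ⟨hAr, hA⟩, mem_avoiders.2 ⟨hBr, hB⟩,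
    by simpa [Nat.add_comm] using hBA.length_eq⟩

theorem card_avoiders213_succ (a k : ℕ) :
    #(avoiders Pattern213 a (k + 1)) = ∑ ij ∈ antidiagonal k,
      #(avoiders Pattern213 (a + 1 + ij.2) ij.1) * #(avoiders Pattern213 (a + 1) ij.2) := by
  simp_rw [← Finset.card_product, ← Finset.card_sigma]
  symm
  refine Finset.card_bij (fun x _ => x.2.1 ++ a :: x.2.2) ?_ ?_ ?_
  · rintro ⟨⟨i, j⟩, A, B⟩ hx
    simp only [Finset.mem_sigma, HasAntidiagonal.mem_antidiagonal, Finset.mem_product] at hx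
    rw [← hx.1]
    exact append_cons_mem_avoiders213 hx.2.1 hx.2.2
  · rintro ⟨⟨i, j⟩, A, B⟩ hx ⟨⟨i', j'⟩, A', B'⟩ hx' h
    simp only [Finset.mem_sigma, HasAntidiagonal.mem_antidiagonal, Finset.mem_product] at hx hx'
    have hnA : a ∉ A := fun ha => by have := le_of_mem_avoiders hx.2.1 ha; omega
    have hnB : a ∉ B := fun hb => by have := le_of_mem_avoiders hx.2.2 hb; omega
    obtain ⟨rfl, -, rfl⟩ := (append_cons_inj_of_notMem hnA hnB).1 h
    have hj := (length_of_mem_avoiders hx.2.2).symm.trans (length_of_mem_avoiders hx'.2.2)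
    obtain rfl : i = i' := by omega
    rw [hj]
  · intro l hl
    obtain ⟨A, B, rfl, hA, hB, hk⟩ := exists_append_cons_of_mem_avoiders213 hl
    exact ⟨⟨(A.length, B.length), A, B⟩, by simpa [hk] using ⟨hA, hB⟩, rfl⟩

theorem card_avoiders213 (a k : ℕ) : #(avoiders Pattern213 a k) = catalan k := by
  induction k using Nat.strong_induction_on generalizing a with
  | _ k ih =>
    rcases k with _ | k
    · rw [avoiders_zero, Finset.card_singleton, catalan_zero]
    · rw [card_avoiders213_succ, catalan_succ']
      refine Finset.sum_congr rfl fun ij hij => ?_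
      rw [HasAntidiagonal.mem_antidiagonal] at hij
      rw [ih _ (by omega), ih _ (by omega)]

theorem card_avoiders312 (a k : ℕ) :
    #(avoiders Pattern312 a k) = #(avoiders Pattern213 a k) := by
  refine Finset.card_nbij' reverse reverse (fun l hl => ?_) (fun l hl => ?_)
    (fun l _ => reverse_reverse l) (fun l _ => reverse_reverse l)
  · obtain ⟨hperm, havoid⟩ := mem_avoiders.1 hl
    exact mem_avoiders.2 ⟨(reverse_perm l).trans hperm, avoids_reverse_iff.2 havoid⟩
  · obtain ⟨hperm, havoid⟩ := mem_avoiders.1 hl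
    exact mem_avoiders.2 ⟨(reverse_perm l).trans hperm, avoids_reverse_iff.2 havoid⟩

end Avoiders

section Perm

variable {n : ℕ}

theorem ofFn_val_perm_range' (σ : Equiv.Perm (Fin n)) :
    ofFn (fun i => (σ i : ℕ)) ~ range' 0 n := by
  refine (perm_ext_iff_of_nodup (nodup_ofFn.2 fun i j h => σ.injective (Fin.ext h))
    nodup_range').2 fun x => ?_
  rw [mem_ofFn, mem_range'_1, Nat.zero_add]
  refine ⟨fun ⟨i, hi⟩ => hi ▸ ⟨Nat.zero_le _, (σ i).isLt⟩, fun hx => ⟨σ.symm ⟨x, hx.2⟩, by simp⟩⟩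

theorem card_perm_subtype_eq_card_filter (q : List ℕ → Prop) [DecidablePred q] :
    Nat.card {σ : Equiv.Perm (Fin n) // q (ofFn fun i => (σ i : ℕ))} =
      #((range' 0 n).permutations.toFinset.filter q) := by
  set F : Equiv.Perm (Fin n) → List ℕ := fun σ => ofFn fun i => (σ i : ℕ)
  have hF : Function.Injective F := fun σ τ h =>
    Equiv.ext fun i => Fin.ext (congrFun (ofFn_injective h) i)
  have himage : univ.image F = (range' 0 n).permutations.toFinset := by
    refine Finset.eq_of_subset_of_card_le (fun l hl => ?_) ?_
    · obtain ⟨σ, -, rfl⟩ := Finset.mem_image.1 hl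
      simpa [mem_permutations] using ofFn_val_perm_range' σ
    · rw [card_image_of_injective _ hF, card_univ, Fintype.card_perm, Fintype.card_fin,
        toFinset_card_of_nodup (nodup_permutations _ nodup_range'), length_permutations,
        length_range']
  rw [Nat.card_eq_fintype_card, Fintype.card_subtype, ← himage, filter_image,
    card_image_of_injective _ hF]

theorem card_filter_head_zero_avoids (p : ℕ → ℕ → ℕ → Prop) (hp : ∀ y z, ¬ p 0 y z) (m : ℕ)
    [DecidablePred fun l : List ℕ => l.head? = some 0 ∧ Avoids p l] :
    #((range' 0 (m + 1)).permutations.toFinset.filter fun l => l.head? = some 0 ∧ Avoids p l) =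
      #(avoiders p 1 m) := by
  refine Finset.card_nbij' tail (cons 0) (fun l hl => ?_) (fun t ht => ?_)
    (fun l hl => ?_) (fun t _ => rfl)
  · simp only [coe_filter, Set.mem_ofPred_eq, mem_toFinset, mem_permutations,
      head?_eq_some_iff] at hl
    obtain ⟨hperm, ⟨t, rfl⟩, havoid⟩ := hl
    exact mem_avoiders.2 ⟨hperm.cons_inv, (avoids_cons_iff hp).1 havoid⟩
  · obtain ⟨hperm, havoid⟩ := mem_avoiders.1 ht
    simpa [mem_permutations, range'_succ, avoids_cons_iff hp] using ⟨hperm, havoid⟩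
  · simp only [coe_filter, Set.mem_ofPred_eq, head?_eq_some_iff] at hl
    obtain ⟨-, ⟨t, rfl⟩, -⟩ := hl
    rfl

theorem card_perm_fixing_zero_avoiding (p : ℕ → ℕ → ℕ → Prop) (hp : ∀ y z, ¬ p 0 y z)
    (hn : 0 < n) :
    Nat.card {σ : Equiv.Perm (Fin n) // σ ⟨0, hn⟩ = ⟨0, hn⟩ ∧
        ¬ ∃ i j k : Fin n, i < j ∧ j < k ∧ p (σ i) (σ j) (σ k)} = #(avoiders p 1 (n - 1)) := by
  classical
  obtain ⟨m, rfl⟩ : ∃ m, n = m + 1 := ⟨n - 1, by omega⟩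
  rw [Nat.add_sub_cancel, ← card_filter_head_zero_avoids p hp m,
    ← card_perm_subtype_eq_card_filter]
  refine Nat.card_congr (Equiv.subtypeEquivRight fun σ => ?_)
  rw [avoids_ofFn_iff, ofFn_succ, head?_cons, Option.some_inj, Fin.ext_iff]
  rfl

end Perm

end PermPattern

open PermPattern in
/-- The number of `213`-avoiding permutations of `{1,…,n}` fixing `1` equals the number of
`312`-avoiding permutations of `{1,…,n}` fixing `1`, and both equal the Catalan number
`C_{n-1}`. -/
theorem stmt15 (n : ℕ) (hn : 0 < n) :
    Nat.card {α : Equiv.Perm (Fin n) // α ⟨0, hn⟩ = ⟨0, hn⟩ ∧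
        ¬ ∃ i j k : Fin n, i < j ∧ j < k ∧ α j < α i ∧ α i < α k}
      = Nat.card {α : Equiv.Perm (Fin n) // α ⟨0, hn⟩ = ⟨0, hn⟩ ∧
        ¬ ∃ i j k : Fin n, i < j ∧ j < k ∧ α j < α k ∧ α k < α i}
    ∧ Nat.card {α : Equiv.Perm (Fin n) // α ⟨0, hn⟩ = ⟨0, hn⟩ ∧
        ¬ ∃ i j k : Fin n, i < j ∧ j < k ∧ α j < α i ∧ α i < α k}
      = catalan (n - 1) := by
  have h213 := (card_perm_fixing_zero_avoiding Pattern213 (fun _ _ h => Nat.not_lt_zero _ h.1)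
    hn).trans (card_avoiders213 1 (n - 1))
  have h312 := (card_perm_fixing_zero_avoiding Pattern312 (fun _ _ h => Nat.not_lt_zero _ h.2)
    hn).trans ((card_avoiders312 1 (n - 1)).trans (card_avoiders213 1 (n - 1)))
  exact ⟨h213.trans h312.symm, h213⟩
end

section
/- For every prime power q and finite rooted tree T, the variety X_T over F_q has exactly φ_T(q) rational points, where φ_T is defined recursively by φ_T(q) = ∏_k (1 + q φ_{T_k}(q)); equivalently, the number of prunings S of T weighted by q^{|edges(S)|} counts the F_q-points of a disjoint union of affine spaces A^{rk(S)} over prunings S of T. -/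
/-! A pruning of `node ts` chooses, independently for each child `t`, either to drop it or to
keep the edge to it together with a pruning of `t`. Hence the edge-counting polynomial
`∑_S X ^ e(S)` factors as `∏_t (1 + X · ∑_{S'} X ^ e(S'))`, which is the recursion defining `φ`;
evaluating at `q = |F|` counts `|F ^ e(S)| = q ^ e(S)` points on each cell. -/

open Polynomial

theorem List.sum_map_prod_sections {α R : Type*} [CommSemiring R] (f : α → R) :
    ∀ L : List (List α),
      (L.sections.map fun l => (l.map f).prod).sum = (L.map fun M => (M.map f).sum).prod
  | [] => by simp
  | M :: L => by
    simp only [List.sections, List.flatMap, List.map_flatten, List.sum_flatten, List.map_map,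
      List.map_cons, List.prod_cons, ← List.sum_map_prod_sections f L, Function.comp_def,
      List.sum_map_mul_right, List.sum_map_mul_left]

theorem List.prod_map_reduceOption {α M : Type*} [Monoid M] (f : α → M) (l : List (Option α)) :
    (l.reduceOption.map f).prod = (l.map fun o => o.elim 1 f).prod := by
  induction l with
  | nil => simp
  | cons o l ih => cases o <;> simp [ih]

namespace RTree

theorem pow_numEdges_node {M : Type*} [CommMonoid M] (q : M) (ts : List RTree) :
    q ^ numEdges (node ts) = (ts.map fun t => q ^ (numEdges t + 1)).prod := by
  induction ts with
  | nil => simp [numEdges_node]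
  | cons t ts ih => simp_all [numEdges_node, pow_add]

theorem sum_X_pow_numEdges_prunings :
    ∀ T : RTree, ((prunings T).map fun S => (X : ℤ[X]) ^ numEdges S).sum = phi T
  | node ts => by
    have hchild : ∀ t ∈ ts, ((none :: (prunings t).map some).map
        fun o => o.elim 1 fun r => (X : ℤ[X]) ^ (numEdges r + 1)).sum = 1 + X * phi t := by
      intro t ht
      rw [← sum_X_pow_numEdges_prunings t]
      simp [Function.comp_def, List.sum_map_mul_left, pow_succ']
    simp only [prunings_node, phi_node, List.map_map, Function.comp_def, pow_numEdges_node,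
      List.prod_map_reduceOption, List.sum_map_prod_sections]
    exact congrArg List.prod (List.map_congr_left hchild)

end RTree

theorem stmt16_general (T : RTree) (F : Type*) [Fintype F] :
    (((RTree.prunings T).map fun S => (Nat.card (Fin (RTree.numEdges S) → F) : ℤ)).sum)
      = Polynomial.eval ((Fintype.card F : ℤ)) (RTree.phi T) := by
  rw [← RTree.sum_X_pow_numEdges_prunings, eval_listSum, List.map_map]
  refine congrArg List.sum (List.map_congr_left fun S _ => ?_)
  simp [Nat.card_eq_fintype_card]

/-- Over any finite field `F` (whose cardinality is necessarily a prime power `q`), the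
variety `X_T` — a disjoint union of affine cells `𝔸^{e(S)}` over the prunings `S` of
`T` — has exactly `φ_T(q)` rational points. -/
theorem stmt16 (T : RTree) (F : Type*) [Field F] [Fintype F] :
    (((RTree.prunings T).map fun S => (Nat.card (Fin (RTree.numEdges S) → F) : ℤ)).sum)
      = Polynomial.eval ((Fintype.card F : ℤ)) (RTree.phi T) :=
  stmt16_general T F
end

section
/- For every positive integer n, ∑_{k=1}^{n} (k-1)! c(n,k) q^{k-1} = ∑_{T increasing tree on {1,...,n}} rgf_{L_T}(q), where rgf_{L_T}(q) = ∑_{S pruning of T} q^{e(S)} is the rank-generating function of the pruning lattice of T. -/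
/-!
Both sides satisfy `P₁ = 1` and `Pₙ₊₁ = n • Pₙ + X (X Pₙ)'`.

A permutation of `n + 1` points arises from one of `n` points by inserting the new point either
as a fixed point, which turns a weight `(k-1)! X^(k-1)` for `k` cycles into
`k! X^k = X (X · (k-1)! X^(k-1))'`, or into an existing cycle right before one of the `n` old
points, which keeps the number of cycles.

An increasing tree on `n + 1` vertices arises from one on `n` vertices by attaching the new
largest vertex as a leaf below one of the `n` old vertices `c`. A pruning of the new tree is a
pruning `S` of the old one, possibly together with the new leaf, which is allowed when `c` is the
root or lies in `S`: this gives `n X^#S + (#S + 1) X^(#S + 1) = n X^#S + X (X · X^#S)'`.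
-/

open Equiv Equiv.Perm Finset Polynomial

theorem Setoid.card_quotient_eq_of_comap {α β : Type*} {s : Setoid α} {t : Setoid β}
    (f : α → β) (hf : ∀ a b, t (f a) (f b) ↔ s a b) (hsurj : ∀ b, ∃ a, t b (f a)) :
    Nat.card (Quotient s) = Nat.card (Quotient t) := by
  refine Nat.card_eq_of_bijective (Quotient.map f fun a b => (hf a b).2) ⟨?_, ?_⟩
  · rintro ⟨a⟩ ⟨b⟩ h
    exact Quotient.sound ((hf a b).1 (Quotient.exact h))
  · rintro ⟨b⟩
    obtain ⟨a, hab⟩ := hsurj b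
    exact ⟨Quotient.mk _ a, (Quotient.sound hab).symm⟩

namespace Equiv.Perm

variable {α β : Type*} {f : Perm α} {x y : α}

theorem SameCycle.mem_of_mapsTo [Finite α] {s : Set α} (h : f.SameCycle x y) (hx : x ∈ s)
    (hs : Set.MapsTo f s s) : y ∈ s := by
  obtain ⟨k, -, rfl⟩ := h.exists_pow_eq'
  rw [coe_pow]
  exact hs.iterate k hx

theorem sameCycle_iff_of_semiconj [Finite α] [Finite β] {σ : Perm β} {g : α → β}
    (hg : Function.Injective g) (h : Function.Semiconj g f σ) :
    σ.SameCycle (g x) (g y) ↔ f.SameCycle x y := by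
  constructor
  · intro hxy
    have : g y ∈ g '' {w | f.SameCycle x w} := by
      refine hxy.mem_of_mapsTo ⟨x, .rfl, rfl⟩ ?_
      rintro _ ⟨w, hw, rfl⟩
      exact ⟨f w, sameCycle_apply_right.2 hw, h w⟩
    exact hg.mem_set_image.1 this
  · intro hxy
    refine hxy.mem_of_mapsTo (s := {w | σ.SameCycle (g x) (g w)}) .rfl fun w hw => ?_
    simpa only [Set.mem_ofPred_eq, h w] using sameCycle_apply_right.2 hw

/-- If `f` fixes `a`, then `swap a b * f` splices `a` into the cycle of `b`, just before `b`. -/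
theorem sameCycle_swap_mul_iff [Finite α] [DecidableEq α] {a b : α} (ha : f a = a) (hx : x ≠ a)
    (hy : y ≠ a) : (swap a b * f).SameCycle x y ↔ f.SameCycle x y := by
  constructor
  · intro hxy
    have : y ∈ {w | f.SameCycle x w ∨ (w = a ∧ f.SameCycle x b)} := by
      refine hxy.mem_of_mapsTo (Or.inl .rfl) ?_
      rintro w (hw | ⟨rfl, hb⟩)
      · have hwa : w ≠ a := by rintro rfl; exact hx (hw.eq_of_right ha)
        have hfw : f w ≠ a := fun h => hwa (f.injective (h.trans ha.symm))
        by_cases hb : f w = b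
        · exact Or.inr ⟨by simp [hb], hb ▸ sameCycle_apply_right.2 hw⟩
        · exact Or.inl (by simpa [swap_apply_of_ne_of_ne hfw hb] using hw)
      · exact Or.inl (by simpa [ha] using hb)
    exact this.resolve_right fun h => hy h.1
  · intro hxy
    refine hxy.mem_of_mapsTo (s := {w | (swap a b * f).SameCycle x w}) .rfl fun w hw => ?_
    suffices (swap a b * f).SameCycle w (f w) from hw.trans this
    by_cases hwa : w = a
    · rw [hwa, ha]
    by_cases hb : f w = b
    · have : (swap a b * f) ((swap a b * f) w) = f w := by simp [hb, ha]
      exact this ▸ sameCycle_apply_right.2 (sameCycle_apply_right.2 .rfl)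
    · have hfw : f w ≠ a := fun h => hwa (f.injective (h.trans ha.symm))
      have : (swap a b * f) w = f w := by simp [swap_apply_of_ne_of_ne hfw hb]
      exact this ▸ sameCycle_apply_right.2 .rfl

variable {n : ℕ}

theorem decomposeFin_symm_eq_swap_mul (p : Fin (n + 1)) (e : Perm (Fin n)) :
    decomposeFin.symm (p, e) = swap 0 p * decomposeFin.symm (0, e) := by
  ext i
  cases i using Fin.cases <;> simp [decomposeFin_symm_apply_zero, decomposeFin_symm_apply_succ]

theorem semiconj_succ_decomposeFin_symm_zero (e : Perm (Fin n)) :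
    Function.Semiconj Fin.succ e (decomposeFin.symm (0, e)) := fun x => by
  simp [decomposeFin_symm_apply_succ]

theorem sameCycle_decomposeFin_symm_succ_succ_iff (p : Fin (n + 1)) (e : Perm (Fin n))
    {x y : Fin n} : (decomposeFin.symm (p, e)).SameCycle x.succ y.succ ↔ e.SameCycle x y := by
  rw [decomposeFin_symm_eq_swap_mul, sameCycle_swap_mul_iff (decomposeFin_symm_apply_zero 0 e)
    (Fin.succ_ne_zero x) (Fin.succ_ne_zero y)]
  exact sameCycle_iff_of_semiconj (Fin.succ_injective n)
    (semiconj_succ_decomposeFin_symm_zero e)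

end Equiv.Perm

theorem cycleCount_eq_card_quotient {n : ℕ} (σ : Perm (Fin n)) :
    cycleCount σ = Nat.card (Quotient (SameCycle.setoid σ)) := by
  suffices MulAction.orbitRel (Subgroup.zpowers σ) (Fin n) = SameCycle.setoid σ by
    rw [cycleCount, this]
  ext x y
  rw [MulAction.orbitRel_apply, MulAction.mem_orbit_iff]
  change _ ↔ σ.SameCycle x y
  rw [sameCycle_comm]
  constructor
  · rintro ⟨⟨_, k, rfl⟩, h⟩
    exact ⟨k, h⟩
  · rintro ⟨k, h⟩
    exact ⟨⟨σ ^ k, k, rfl⟩, h⟩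

theorem cycleCount_decomposeFin_symm_zero {n : ℕ} (e : Perm (Fin n)) :
    cycleCount (decomposeFin.symm (0, e)) = cycleCount e + 1 := by
  have hsucc (x y : Fin n) := sameCycle_decomposeFin_symm_succ_succ_iff 0 e (x := x) (y := y)
  have hzero : ∀ z, (decomposeFin.symm (0, e)).SameCycle 0 z → 0 = z :=
    fun z h => h.eq_of_left (decomposeFin_symm_apply_zero 0 e)
  rw [cycleCount_eq_card_quotient, cycleCount_eq_card_quotient, ← Finite.card_option]
  symm
  refine Nat.card_eq_of_bijective
    (fun o => o.elim (Quotient.mk _ 0) (Quotient.map Fin.succ fun x y => (hsucc x y).2))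
    ⟨?_, ?_⟩
  · rintro (_ | ⟨⟨x⟩⟩) (_ | ⟨⟨y⟩⟩) h
    · rfl
    · exact absurd (hzero _ (Quotient.exact h)) (Fin.succ_ne_zero y).symm
    · exact absurd (hzero _ (Quotient.exact h).symm) (Fin.succ_ne_zero x).symm
    · exact congrArg some (Quotient.sound ((hsucc x y).1 (Quotient.exact h)))
  · rintro ⟨z⟩
    cases z using Fin.cases with
    | zero => exact ⟨none, rfl⟩
    | succ x => exact ⟨some (Quotient.mk _ x), rfl⟩

theorem cycleCount_decomposeFin_symm_succ {n : ℕ} (p : Fin n) (e : Perm (Fin n)) :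
    cycleCount (decomposeFin.symm (p.succ, e)) = cycleCount e := by
  rw [cycleCount_eq_card_quotient, cycleCount_eq_card_quotient]
  refine (Setoid.card_quotient_eq_of_comap Fin.succ (fun x y => ?_) fun z => ?_).symm
  · exact sameCycle_decomposeFin_symm_succ_succ_iff _ e
  · cases z using Fin.cases with
    | zero => exact ⟨p, decomposeFin_symm_apply_zero p.succ e ▸ sameCycle_apply_right.2 .rfl⟩
    | succ x => exact ⟨x, .rfl⟩

theorem cycleCount_mem_Icc {n : ℕ} [NeZero n] (σ : Perm (Fin n)) :
    cycleCount σ ∈ Icc 1 n := by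
  rw [cycleCount_eq_card_quotient, mem_Icc, Nat.one_le_iff_ne_zero, ← Nat.pos_iff_ne_zero]
  refine ⟨Nat.card_pos, ?_⟩
  simpa using
    Nat.card_le_card_of_surjective _ (Quotient.mk_surjective (s := SameCycle.setoid σ))

noncomputable def insertionOp (n : ℕ) : ℤ[X] →ₗ[ℤ] ℤ[X] :=
  n • LinearMap.id + LinearMap.mulLeft ℤ X ∘ₗ derivative ∘ₗ LinearMap.mulLeft ℤ X

theorem insertionOp_apply (n : ℕ) (f : ℤ[X]) :
    insertionOp n f = n • f + X * derivative (X * f) := rfl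

noncomputable def cycleWeight (k : ℕ) : ℤ[X] := C ((k - 1).factorial : ℤ) * X ^ (k - 1)

theorem cycleWeight_succ {k : ℕ} (hk : k ≠ 0) :
    cycleWeight (k + 1) = X * derivative (X * cycleWeight k) := by
  obtain ⟨j, rfl⟩ := Nat.exists_eq_add_one_of_ne_zero hk
  simp only [cycleWeight, Nat.add_sub_cancel]
  rw [mul_left_comm, ← pow_succ', derivative_C_mul_X_pow, Nat.add_sub_cancel, Nat.factorial_succ]
  simp only [Nat.cast_mul, Nat.cast_succ, map_mul, map_add, map_one]
  ring

noncomputable def cyclePoly (n : ℕ) : ℤ[X] := ∑ σ : Perm (Fin n), cycleWeight (cycleCount σ)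

theorem sum_cycleWeight_decomposeFin_symm {n : ℕ} (e : Perm (Fin (n + 1))) :
    ∑ p, cycleWeight (cycleCount (decomposeFin.symm (p, e))) =
      insertionOp (n + 1) (cycleWeight (cycleCount e)) := by
  have he : cycleCount e ≠ 0 := Nat.one_le_iff_ne_zero.1 (mem_Icc.1 (cycleCount_mem_Icc e)).1
  simp only [Fin.sum_univ_succ, cycleCount_decomposeFin_symm_zero,
    cycleCount_decomposeFin_symm_succ, sum_const, card_univ, Fintype.card_fin,
    cycleWeight_succ he, insertionOp_apply]
  abel

theorem cyclePoly_succ_succ (n : ℕ) :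
    cyclePoly (n + 2) = insertionOp (n + 1) (cyclePoly (n + 1)) := by
  rw [cyclePoly, ← (decomposeFin.symm).sum_comp, Fintype.sum_prod_type, sum_comm, cyclePoly,
    map_sum]
  exact sum_congr rfl fun e _ => sum_cycleWeight_decomposeFin_symm e

theorem cyclePoly_one : cyclePoly 1 = 1 := by
  have h1 (σ : Perm (Fin 1)) : cycleCount σ = 1 := by
    simpa using cycleCount_mem_Icc σ
  simp [cyclePoly, h1, cycleWeight]

theorem sum_stirling1_smul {M : Type*} [AddCommMonoid M] (n : ℕ) [NeZero n] (w : ℕ → M) :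
    ∑ k ∈ Icc 1 n, stirling1 n k • w k = ∑ σ : Perm (Fin n), w (cycleCount σ) := by
  rw [← sum_fiberwise_of_maps_to (fun σ _ => cycleCount_mem_Icc σ)]
  refine sum_congr rfl fun k _ => ?_
  rw [sum_congr rfl fun σ hσ => congrArg w (mem_filter.1 hσ).2, sum_const, stirling1,
    Nat.card_eq_fintype_card, Fintype.card_subtype]

theorem Fin.sum_finset_eq_sum_castSucc {M : Type*} [AddCommMonoid M] {n : ℕ}
    (f : Finset (Fin (n + 1)) → M) :
    ∑ S, f S = ∑ S : Finset (Fin n),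
      (f (S.image Fin.castSucc) + f (insert (Fin.last n) (S.image Fin.castSucc))) := by
  have hinj : Set.InjOn (image Fin.castSucc) (univ : Finset (Finset (Fin n))) :=
    (image_injective (Fin.castSucc_injective n)).injOn
  rw [← powerset_univ, Fin.univ_castSuccEmb, cons_eq_insert, sum_powerset_insert (by simp),
    map_eq_image, Fin.coe_castSuccEmb, powerset_image, powerset_univ, sum_image hinj,
    sum_image hinj, ← sum_add_distrib]

section Trees

variable {n : ℕ}

def increasingParents (n : ℕ) [NeZero n] : Finset (Fin n → Fin n) :=
  univ.filter fun p => p 0 = 0 ∧ ∀ i, i ≠ 0 → p i < i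

/-- A pruning is recorded by its set of non-root vertices, which has one element per edge. -/
def prunings [NeZero n] (p : Fin n → Fin n) : Finset (Finset (Fin n)) :=
  univ.filter fun S => 0 ∉ S ∧ ∀ i ∈ S, p i ≠ 0 → p i ∈ S

noncomputable def pruningPoly [NeZero n] (p : Fin n → Fin n) : ℤ[X] :=
  ∑ S ∈ prunings p, X ^ S.card

noncomputable def treePoly (n : ℕ) [NeZero n] : ℤ[X] :=
  ∑ p ∈ increasingParents n, pruningPoly p

def extendParent (p : Fin (n + 1) → Fin (n + 1)) (c : Fin (n + 1)) :
    Fin (n + 2) → Fin (n + 2) :=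
  Fin.lastCases c.castSucc fun i => (p i).castSucc

@[simp] theorem extendParent_last (p : Fin (n + 1) → Fin (n + 1)) (c : Fin (n + 1)) :
    extendParent p c (Fin.last _) = c.castSucc := by
  simp [extendParent]

@[simp] theorem extendParent_castSucc (p : Fin (n + 1) → Fin (n + 1)) (c i : Fin (n + 1)) :
    extendParent p c i.castSucc = (p i).castSucc := by
  simp [extendParent]

@[simp] theorem extendParent_zero (p : Fin (n + 1) → Fin (n + 1)) (c : Fin (n + 1)) :
    extendParent p c 0 = (p 0).castSucc :=
  extendParent_castSucc p c 0

theorem extendParent_mem_increasingParents {p : Fin (n + 1) → Fin (n + 1)}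
    (hp : p ∈ increasingParents (n + 1)) (c : Fin (n + 1)) :
    extendParent p c ∈ increasingParents (n + 2) := by
  simp only [increasingParents, mem_filter, mem_univ, true_and] at hp ⊢
  refine ⟨by simpa using hp.1, fun i hi => ?_⟩
  cases i using Fin.lastCases with
  | last => simp
  | cast i => simpa using hp.2 i (by simpa using hi)

theorem sum_increasingParents_succ {M : Type*} [AddCommMonoid M]
    (f : (Fin (n + 2) → Fin (n + 2)) → M) :
    ∑ p ∈ increasingParents (n + 2), f p =
      ∑ p ∈ increasingParents (n + 1), ∑ c, f (extendParent p c) := by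
  rw [← sum_product']
  symm
  refine sum_bij (fun pc _ => extendParent pc.1 pc.2)
    (fun pc hpc => extendParent_mem_increasingParents (mem_product.1 hpc).1 _) ?_ ?_
    fun _ _ => rfl
  · rintro ⟨p, c⟩ - ⟨p', c'⟩ - h
    have hc := congrFun h (Fin.last _)
    have hp := fun i => congrFun h (Fin.castSucc i)
    simp only [extendParent_last, extendParent_castSucc, Fin.castSucc_inj] at hc hp
    simp [funext hp, hc]
  · intro q hq
    simp only [increasingParents, mem_filter, mem_univ, true_and] at hq
    have hne : ∀ i, q i ≠ Fin.last _ := fun i => by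
      by_cases hi : i = 0
      · simp [hi, hq.1]
      · exact ((hq.2 i hi).trans_le (Fin.le_last i)).ne
    refine ⟨(fun i => (q i.castSucc).castPred (hne _), (q (Fin.last _)).castPred (hne _)),
      ?_, ?_⟩
    · simp only [increasingParents, mem_product, mem_filter, mem_univ, true_and, and_true]
      refine ⟨by simp [hq.1], fun i hi => ?_⟩
      rw [← Fin.castSucc_lt_castSucc_iff, Fin.castSucc_castPred]
      exact hq.2 _ (by simpa using hi)
    · funext i
      cases i using Fin.lastCases <;> simp

variable {p : Fin (n + 1) → Fin (n + 1)} {c : Fin (n + 1)} {S : Finset (Fin (n + 1))}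

theorem image_castSucc_mem_prunings_extendParent :
    S.image Fin.castSucc ∈ prunings (extendParent p c) ↔ S ∈ prunings p := by
  simp [prunings]

theorem insert_last_mem_prunings_extendParent :
    insert (Fin.last _) (S.image Fin.castSucc) ∈ prunings (extendParent p c) ↔
      S ∈ prunings p ∧ (c ≠ 0 → c ∈ S) := by
  simp [prunings]
  tauto

theorem pruningPoly_extendParent :
    pruningPoly (extendParent p c) =
      ∑ S ∈ prunings p, (X ^ S.card + if c ≠ 0 → c ∈ S then X ^ (S.card + 1) else 0) := by
  have hcard (S : Finset (Fin (n + 1))) : (S.image Fin.castSucc).card = S.card :=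
    card_image_of_injective _ (Fin.castSucc_injective _)
  rw [pruningPoly, ← univ_inter (prunings _), ← sum_ite_mem, Fin.sum_finset_eq_sum_castSucc,
    ← univ_inter (prunings p), ← sum_ite_mem]
  refine sum_congr rfl fun S _ => ?_
  have hlast : Fin.last _ ∉ S.image Fin.castSucc := by simp
  simp only [image_castSucc_mem_prunings_extendParent, insert_last_mem_prunings_extendParent,
    card_insert_of_notMem hlast, hcard, ite_and]
  split_ifs <;> simp

theorem sum_pruningPoly_extendParent (p : Fin (n + 1) → Fin (n + 1)) :
    ∑ c, pruningPoly (extendParent p c) = insertionOp (n + 1) (pruningPoly p) := by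
  simp_rw [pruningPoly_extendParent]
  rw [sum_comm, pruningPoly, map_sum]
  refine sum_congr rfl fun S hS => ?_
  have h0 : 0 ∉ S := (mem_filter.1 hS).2.1
  have hfilter : univ.filter (fun c : Fin (n + 1) => c ≠ 0 → c ∈ S) = insert 0 S := by
    ext c
    simp [or_iff_not_imp_left]
  rw [sum_add_distrib, ← sum_filter, hfilter, sum_const, sum_const, card_univ, Fintype.card_fin,
    card_insert_of_notMem h0, insertionOp_apply, ← pow_succ', derivative_X_pow]
  simp only [Nat.add_sub_cancel, nsmul_eq_mul, Nat.cast_succ, map_add, map_natCast, map_one]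
  ring

theorem treePoly_succ_succ (n : ℕ) :
    treePoly (n + 2) = insertionOp (n + 1) (treePoly (n + 1)) := by
  rw [treePoly, sum_increasingParents_succ, treePoly, map_sum]
  exact sum_congr rfl fun p _ => sum_pruningPoly_extendParent p

theorem treePoly_one : treePoly 1 = 1 := by
  have hparents : increasingParents 1 = {fun _ => 0} := by decide
  have hprunings : prunings (fun _ : Fin 1 => 0) = {∅} := by decide
  simp [treePoly, hparents, pruningPoly, hprunings]

end Trees

theorem cyclePoly_eq_treePoly (n : ℕ) : cyclePoly (n + 1) = treePoly (n + 1) := by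
  induction n with
  | zero => rw [cyclePoly_one, treePoly_one]
  | succ n ih => rw [cyclePoly_succ_succ, treePoly_succ_succ, ih]

/-- `∑_{k=1}^n (k-1)! c(n,k) q^{k-1} = ∑_{T increasing tree on {1,…,n}} rgf_{L_T}(q)`,
where increasing trees are encoded by parent functions `p` with `p i < i` for non-root
vertices, and `rgf_{L_T}(q) = ∑_{S pruning of T} q^{#edges(S)}`, the sum being over sets
`S` of non-root vertices closed under taking (non-root) parents. -/
theorem stmt18 (n : ℕ) (hn : 0 < n) :
    (∑ k ∈ Finset.Icc 1 n,
        Polynomial.C ((Nat.factorial (k - 1) * stirling1 n k : ℕ) : ℤ)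
          * (Polynomial.X : Polynomial ℤ) ^ (k - 1))
      = ∑ p ∈ Finset.univ.filter (fun p : Fin n → Fin n =>
            p ⟨0, hn⟩ = ⟨0, hn⟩ ∧ ∀ i : Fin n, i ≠ ⟨0, hn⟩ → p i < i),
          ∑ S ∈ Finset.univ.filter (fun S : Finset (Fin n) =>
              (⟨0, hn⟩ : Fin n) ∉ S ∧ ∀ i ∈ S, p i ≠ ⟨0, hn⟩ → p i ∈ S),
            (Polynomial.X : Polynomial ℤ) ^ S.card := by
  obtain ⟨m, rfl⟩ := Nat.exists_eq_add_one_of_ne_zero hn.ne'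
  have hterm (k : ℕ) : C (((k - 1).factorial * stirling1 (m + 1) k : ℕ) : ℤ) * X ^ (k - 1) =
      stirling1 (m + 1) k • cycleWeight k := by
    simp only [cycleWeight, Nat.cast_mul, map_mul, map_natCast, nsmul_eq_mul]
    ring
  simp_rw [hterm, sum_stirling1_smul]
  rw [← cyclePoly, cyclePoly_eq_treePoly]
  rfl
end
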